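/- Let a, c, d, f ∈ ℝ and define e₁(x,y) = c·x·y + (d+f)·x and e₂(x,y) = c·x·y + (d−f)·y. Then for all (x,y) ∈ ℝ²: −y·e₁(x,y) − x·e₂(x,y) + x·y·( ∂e₁/∂x(x,y) + ∂e₂/∂y(x,y) ) = 0; consequently the vector field E = e₁ ∂_x + e₂ ∂_y satisfies [E, Λ] = 0 for the Lotka–Volterra bivector Λ = −a·x·y ∂_x ∧ ∂_y, so (Λ, E) is a Jacobi structure on ℝ². -/

import Mathlib

/-- For `e₁ = cxy + (d+f)x` and `e₂ = cxy + (d−f)y`, the scalar identity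
`−y·e₁ − x·e₂ + xy(∂ₓe₁ + ∂_y e₂) = 0` holds, which is the condition
`[E, Λ] = 0` for the Lotka–Volterra bivector `Λ = −axy ∂x ∧ ∂y`, so that
`(Λ, E)` with `E = e₁ ∂x + e₂ ∂y` is a Jacobi structure on `ℝ²`. -/
theorem stmt_15 (a c d f : ℝ) (e₁ e₂ : ℝ → ℝ → ℝ)
    (he₁ : ∀ x y, e₁ x y = c * x * y + (d + f) * x)
    (he₂ : ∀ x y, e₂ x y = c * x * y + (d - f) * y) :
    ∀ x y : ℝ,
      -y * e₁ x y - x * e₂ x y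
        + x * y * (deriv (fun s => e₁ s y) x + deriv (fun s => e₂ x s) y) = 0 := by
  intro x y
  have h1 : (fun s => e₁ s y) = fun s => c * s * y + (d + f) * s := by
    funext s; exact he₁ s y
  have h2 : (fun s => e₂ x s) = fun s => c * x * s + (d - f) * s := by
    funext s; exact he₂ x s
  have d1 : deriv (fun s => e₁ s y) x = c * y + (d + f) := by
    rw [h1]
    have : HasDerivAt (fun s => c * s * y + (d + f) * s) (c * y + (d + f)) x := by
      have := ((hasDerivAt_id x).const_mul c).mul_const y |>.add
        ((hasDerivAt_id x).const_mul (d + f))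
      simpa [Pi.add_def] using this
    exact this.deriv
  have d2 : deriv (fun s => e₂ x s) y = c * x + (d - f) := by
    rw [h2]
    have : HasDerivAt (fun s => c * x * s + (d - f) * s) (c * x + (d - f)) y := by
      have := ((hasDerivAt_id y).const_mul (c * x)).add
        ((hasDerivAt_id y).const_mul (d - f))
      simpa [Pi.add_def] using this
    exact this.deriv
  rw [he₁, he₂, d1, d2]; ring
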